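/- arXiv:2505.15635 — 5 statements merged into one kernel-verified Lean document; each statement's English description precedes it below -/
import Mathlib

section
/- For real numbers g₁, g₂, θ, the 2×2 complex matrix M = exp(g₂·Y)·exp(i(θ/2)·Z)·exp(g₁·Y), where Y and Z are the Pauli matrices, has trace equal to 2·cosh(g₁+g₂)·cos(θ/2). -/
/-! Since `Y² = Z² = 1`, each exponential is `cosh z • 1 + sinh z • A`, and for `Z` with
`z = iθ/2` this is `cos (θ/2) • 1 + i sin (θ/2) • Z`. Expanding the product, the `Z` part
contributes nothing to the trace, and the rest gives `2 cos (θ/2) (cosh g₁ cosh g₂ + sinh g₁ sinh g₂)`. -/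

open Matrix NormedSpace Complex

noncomputable def PauliY : Matrix (Fin 2) (Fin 2) ℂ := !![0, -Complex.I; Complex.I, 0]
noncomputable def PauliZ : Matrix (Fin 2) (Fin 2) ℂ := !![1, 0; 0, -1]

theorem NormedSpace.exp_smul_eq_cosh_add_sinh {𝔸 : Type*} [Ring 𝔸] [Algebra ℂ 𝔸]
    [TopologicalSpace 𝔸] [IsTopologicalRing 𝔸] [ContinuousSMul ℂ 𝔸] [T2Space 𝔸]
    {A : 𝔸} (hA : A * A = 1) (z : ℂ) :
    exp (z • A) = cosh z • (1 : 𝔸) + sinh z • A := by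
  have hA2 : A ^ 2 = 1 := by rw [sq, hA]
  rw [exp_eq_tsum ℂ]
  refine HasSum.tsum_eq (HasSum.even_add_odd ?_ ?_)
  · convert (hasSum_cosh z).smul_const (1 : 𝔸) using 2 with n
    rw [smul_pow, pow_mul A, hA2, one_pow, smul_smul, div_eq_inv_mul]
  · convert (hasSum_sinh z).smul_const A using 2 with n
    rw [smul_pow, pow_succ A, pow_mul A, hA2, one_pow, one_mul, smul_smul, div_eq_inv_mul]

theorem PauliY_mul_self : PauliY * PauliY = 1 := by
  simp [PauliY, Matrix.one_fin_two]

theorem PauliZ_mul_self : PauliZ * PauliZ = 1 := by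
  simp [PauliZ, Matrix.one_fin_two]

theorem trace_pauli_product (a b c₁ s₁ c₂ s₂ : ℂ) :
    ((c₂ • 1 + s₂ • PauliY) * (a • 1 + b • PauliZ) * (c₁ • 1 + s₁ • PauliY)).trace =
      2 * a * (c₁ * c₂ + s₁ * s₂) := by
  simp only [PauliY, PauliZ, one_fin_two, smul_of, smul_cons, smul_empty, of_add_of, add_cons,
    empty_add_empty, head_cons, tail_cons, mul_fin_two, trace_fin_two, of_apply, cons_val', cons_val_zero,
    cons_val_one, cons_val_fin_one, smul_eq_mul]
  linear_combination (-2 * a * s₁ * s₂) * I_sq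

/-- The trace of exp(g₂·Y)·exp(i(θ/2)·Z)·exp(g₁·Y) equals 2·cosh(g₁+g₂)·cos(θ/2). -/
theorem trace_circuit (g₁ g₂ θ : ℝ) :
    (exp ((g₂ : ℂ) • PauliY) * exp ((Complex.I * (θ / 2 : ℝ)) • PauliZ) *
      exp ((g₁ : ℂ) • PauliY)).trace =
      2 * Real.cosh (g₁ + g₂) * Real.cos (θ / 2) := by
  simp only [exp_smul_eq_cosh_add_sinh PauliY_mul_self, exp_smul_eq_cosh_add_sinh PauliZ_mul_self,
    trace_pauli_product, mul_comm I, cosh_mul_I, Real.cosh_add]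
  push_cast
  ring
end

section
/- For real numbers g₁, g₂ and θ ∈ [π, 3π], the real part of the trace of exp(g₂·Y)·exp(i(θ/2)·Z)·exp(g₁·Y) is ≥ -2 if and only if cosh(g₁+g₂) ≤ 1/|cos(θ/2)| (where the inequality is vacuously true when cos(θ/2) = 0). -/
/-!
The two `Y`-exponentials commute, so cycling the trace merges them into
`exp ((g₁ + g₂) • Y)`, and the trace becomes `tr (exp (i(θ/2) • Z) · exp ((g₁ + g₂) • Y))`,
which equals `2 cos(θ/2) cosh(g₁ + g₂)` once both exponentials are written out
(`Z` is diagonal and `Y` is diagonalised by a fixed unitary). As `cos(θ/2) ≤ 0` on `[π, 3π]`,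
the bound `-2 ≤ 2 cos(θ/2) cosh(g₁ + g₂)` says exactly `|cos(θ/2)| cosh(g₁ + g₂) ≤ 1`.
-/

open Matrix NormedSpace Complex

noncomputable def pauliYEigenbasis : (Matrix (Fin 2) (Fin 2) ℂ)ˣ where
  val := !![1, 1; I, -I]
  inv := !![1 / 2, -I / 2; 1 / 2, I / 2]
  val_inv := by
    rw [mul_fin_two, one_fin_two]
    ring_nf
    norm_num [I_sq]
  inv_val := by
    rw [mul_fin_two, one_fin_two]
    ring_nf
    norm_num [I_sq]

theorem exp_diagonal_fin_two (a b : ℂ) :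
    exp (diagonal ![a, b]) = !![Complex.exp a, 0; 0, Complex.exp b] := by
  rw [exp_diagonal, Pi.exp_def, diagonal_fin_two]
  simp [Complex.exp_eq_exp_ℂ]

theorem smul_pauliY_eq_conj_diagonal (z : ℂ) :
    z • PauliY = (pauliYEigenbasis : Matrix (Fin 2) (Fin 2) ℂ) * diagonal ![z, -z] *
      ((pauliYEigenbasis⁻¹ : (Matrix (Fin 2) (Fin 2) ℂ)ˣ) : Matrix (Fin 2) (Fin 2) ℂ) := by
  simp only [pauliYEigenbasis, Units.inv_mk, Units.val_mk, diagonal_fin_two, PauliY, smul_of,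
    mul_fin_two]
  ext i j
  fin_cases i <;> fin_cases j <;> simp <;> ring

theorem exp_smul_pauliY (z : ℂ) :
    exp (z • PauliY) = !![cosh z, -I * sinh z; I * sinh z, cosh z] := by
  rw [smul_pauliY_eq_conj_diagonal, Matrix.exp_units_conj, exp_diagonal_fin_two, Complex.cosh,
    Complex.sinh]
  simp only [pauliYEigenbasis, Units.inv_mk, Units.val_mk, mul_fin_two]
  ring_nf
  norm_num [I_sq]

theorem exp_smul_pauliZ (z : ℂ) :
    exp (z • PauliZ) = !![Complex.exp z, 0; 0, Complex.exp (-z)] := by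
  rw [← exp_diagonal_fin_two, diagonal_fin_two, PauliZ, smul_of]
  simp

theorem trace_exp_smul_pauliY_mul_exp_smul_pauliZ_mul_exp_smul_pauliY (w₁ w₂ z : ℂ) :
    (exp (w₂ • PauliY) * exp (z • PauliZ) * exp (w₁ • PauliY)).trace =
      2 * cosh z * cosh (w₁ + w₂) := by
  have hY : exp (w₁ • PauliY) * exp (w₂ • PauliY) = exp ((w₁ + w₂) • PauliY) := by
    rw [add_smul, Matrix.exp_add_of_commute]
    exact ((Commute.refl PauliY).smul_left w₁).smul_right w₂
  rw [trace_mul_cycle, hY, exp_smul_pauliZ, exp_smul_pauliY, mul_fin_two, trace_fin_two_of,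
    two_cosh]
  ring

theorem neg_one_le_mul_iff_of_nonpos {c x : ℝ} (hc : c ≤ 0) :
    -1 ≤ c * x ↔ c = 0 ∨ x ≤ 1 / |c| := by
  rcases hc.lt_or_eq with hc | rfl
  · rw [abs_of_neg hc, le_div_iff₀ (neg_pos.2 hc), or_iff_right hc.ne]
    constructor <;> intro h <;> linarith
  · simp

/-- For θ ∈ [π, 3π], the real part of the trace of exp(g₂·Y)·exp(i(θ/2)·Z)·exp(g₁·Y)
is ≥ -2 if and only if cosh(g₁+g₂) ≤ 1/|cos(θ/2)| (vacuously true when cos(θ/2) = 0). -/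
theorem trace_condition (g₁ g₂ θ : ℝ) (hθ : θ ∈ Set.Icc Real.pi (3 * Real.pi)) :
    (-2 ≤ ((exp ((g₂ : ℂ) • PauliY) * exp ((Complex.I * (θ / 2 : ℝ)) • PauliZ) *
        exp ((g₁ : ℂ) • PauliY)).trace).re) ↔
      (Real.cos (θ / 2) = 0 ∨
        Real.cosh (g₁ + g₂) ≤ 1 / |Real.cos (θ / 2)|) := by
  have hcos : Real.cos (θ / 2) ≤ 0 :=
    Real.cos_nonpos_of_pi_div_two_le_of_le (by linarith [hθ.1]) (by linarith [hθ.2])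
  rw [trace_exp_smul_pauliY_mul_exp_smul_pauliZ_mul_exp_smul_pauliY, mul_comm I, cosh_mul_I,
    ← ofReal_add, ← ofReal_cos, ← ofReal_cosh, ← neg_one_le_mul_iff_of_nonpos hcos]
  simp only [← ofReal_ofNat, ← ofReal_mul, ofReal_re]
  constructor <;> intro h <;> linarith
end

section
/- Every matrix of the form exp(-iH) with H = s₁·(-i/2)X + s₂·(-i/2)Y + s₃·(1/2)Z for real s₁, s₂, s₃ (where X, Y, Z are Pauli matrices) has real trace greater than or equal to -2. -/
/-!
The generator A = -iH = (-s₁/2)·X + (-s₂/2)·Y + (-i s₃/2)·Z is traceless, and by the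
anticommutation of the Pauli matrices A² = c·1 with c = (s₁² + s₂² - s₃²)/4 real. Summing the
exponential series, tr exp A = 2 cosh w for any w with w² = c. If c ≥ 0 take w = √c, so the trace
is ≥ 2; if c < 0 take w = i√(-c), so the trace is 2 cos √(-c) ≥ -2.
-/

open Matrix NormedSpace Complex

noncomputable def PauliX : Matrix (Fin 2) (Fin 2) ℂ := !![0, 1; 1, 0]
theorem Complex.exists_sq_eq_ofReal_and_neg_one_le_re_cosh (r : ℝ) :
    ∃ w : ℂ, w ^ 2 = r ∧ -1 ≤ (cosh w).re := by
  rcases le_or_gt 0 r with hr | hr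
  · refine ⟨Real.sqrt r, by rw [← ofReal_pow, Real.sq_sqrt hr], ?_⟩
    rw [cosh_ofReal_re]
    linarith [Real.one_le_cosh (Real.sqrt r)]
  · refine ⟨Real.sqrt (-r) * I, ?_, ?_⟩
    · rw [mul_pow, I_sq, ← ofReal_pow, Real.sq_sqrt (neg_nonneg.mpr hr.le)]
      push_cast
      ring
    · rw [cosh_mul_I, ← ofReal_cos, ofReal_re]
      exact Real.neg_one_le_cos _

namespace Matrix

open Nat

variable {m : Type*} [Fintype m] [DecidableEq m]

section

attribute [local instance] Matrix.linftyOpNormedRing Matrix.linftyOpNormedAlgebra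

theorem hasSum_trace_exp {𝕂 : Type*} [RCLike 𝕂] (A : Matrix m m 𝕂) :
    HasSum (fun n => (n ! : 𝕂)⁻¹ * (A ^ n).trace) (exp A).trace := by
  have := (exp_series_hasSum_exp' (𝕂 := 𝕂) A).mapL (traceLinearMap m 𝕂 𝕂).toContinuousLinearMap
  simp only [LinearMap.coe_toContinuousLinearMap', traceLinearMap_apply, trace_smul,
    smul_eq_mul] at this
  exact this

end

theorem pow_two_mul_of_mul_self_eq_smul_one {R : Type*} [CommSemiring R] {A : Matrix m m R}
    {a : R} (h : A * A = a • 1) (k : ℕ) : A ^ (2 * k) = a ^ k • 1 := by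
  rw [pow_mul, sq, h, smul_pow, one_pow]

theorem trace_exp_eq_card_mul_cosh {A : Matrix m m ℂ} {w : ℂ} (htr : A.trace = 0)
    (hsq : A * A = w ^ 2 • 1) : (exp A).trace = Fintype.card m * cosh w := by
  have heven : HasSum (fun k => ((2 * k)! : ℂ)⁻¹ * (A ^ (2 * k)).trace)
      (Fintype.card m * cosh w) := by
    refine ((Complex.hasSum_cosh w).mul_left (Fintype.card m : ℂ)).congr_fun fun k => ?_
    rw [pow_two_mul_of_mul_self_eq_smul_one hsq, trace_smul, trace_one, ← pow_mul, smul_eq_mul]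
    ring
  have hodd : HasSum (fun k => ((2 * k + 1)! : ℂ)⁻¹ * (A ^ (2 * k + 1)).trace) 0 := by
    have htr_odd : ∀ k, (A ^ (2 * k + 1)).trace = 0 := fun k => by
      rw [pow_succ, pow_two_mul_of_mul_self_eq_smul_one hsq, smul_mul_assoc, one_mul,
        trace_smul, htr, smul_zero]
    simp only [htr_odd, mul_zero]
    exact hasSum_zero
  have hsum := HasSum.even_add_odd (f := fun n => (n ! : ℂ)⁻¹ * (A ^ n).trace) heven hodd
  rw [add_zero] at hsum
  exact (hasSum_trace_exp A).unique hsum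

end Matrix

theorem trace_pauli_combination (a b c : ℂ) :
    (a • PauliX + b • PauliY + c • PauliZ).trace = 0 := by
  simp [PauliX, PauliY, PauliZ, trace_fin_two]

theorem pauli_combination_mul_self (a b c : ℂ) :
    (a • PauliX + b • PauliY + c • PauliZ) * (a • PauliX + b • PauliY + c • PauliZ) =
      (a ^ 2 + b ^ 2 + c ^ 2) • 1 := by
  ext i j
  fin_cases i <;> fin_cases j <;> simp [PauliX, PauliY, PauliZ, mul_apply, Fin.sum_univ_two] <;>
    ring_nf <;> simp only [I_sq] <;> ring

theorem neg_I_smul_sp2_eq_pauli_combination (s₁ s₂ s₃ : ℝ) :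
    (-I) • ((s₁ : ℂ) • ((-I / 2) • PauliX) + (s₂ : ℂ) • ((-I / 2) • PauliY) +
        (s₃ : ℂ) • ((1 / 2 : ℂ) • PauliZ)) =
      (-s₁ / 2 : ℂ) • PauliX + (-s₂ / 2 : ℂ) • PauliY + (-I * s₃ / 2) • PauliZ := by
  match_scalars <;> ring_nf <;> simp only [I_sq] <;> ring

/-- Every matrix exp(-iH), with H = s₁·(-i/2)X + s₂·(-i/2)Y + s₃·(1/2)Z for real s₁ s₂ s₃,
has real trace ≥ -2. -/
theorem trace_exp_sp2_ge_neg_two (s₁ s₂ s₃ : ℝ) :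
    -2 ≤ ((exp ((-Complex.I) •
        ((s₁ : ℂ) • ((-Complex.I / 2) • PauliX) + (s₂ : ℂ) • ((-Complex.I / 2) • PauliY) +
          (s₃ : ℂ) • ((1 / 2 : ℂ) • PauliZ)))).trace).re := by
  obtain ⟨w, hw, hcosh⟩ :=
    Complex.exists_sq_eq_ofReal_and_neg_one_le_re_cosh ((s₁ ^ 2 + s₂ ^ 2 - s₃ ^ 2) / 4)
  have hsq : (-s₁ / 2 : ℂ) ^ 2 + (-s₂ / 2) ^ 2 + (-I * s₃ / 2) ^ 2 = w ^ 2 := by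
    rw [hw]
    push_cast
    linear_combination ((s₃ : ℂ) ^ 2 / 4) * I_sq
  rw [neg_I_smul_sp2_eq_pauli_combination, trace_exp_eq_card_mul_cosh
    (trace_pauli_combination _ _ _) (hsq ▸ pauli_combination_mul_self _ _ _)]
  simp only [Fintype.card_fin, Nat.cast_ofNat, mul_re, re_ofNat, im_ofNat, zero_mul, sub_zero]
  linarith
end

section
/- Define QFI(φ) = (1/4)·sinh²(4g·sin²(φ/2)) + 4g²·cos²(φ/2) for g > 0. Then for all φ ∈ [0, 2π], QFI(φ) ≤ QFI(π), i.e., the global maximum over [0,2π] is attained at φ = π. -/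
/-! With `t = sin² (φ/2) ∈ [0, 1]` and `a = 4g`, the claim reads
`sinh² (a t) + a² (1 - t) ≤ sinh² a`. The gap `sinh² a - sinh² (a t)` factors as
`sinh (a + a t) · sinh (a - a t)`, which dominates `(a + a t)(a - a t) = a² (1 - t²) ≥ a² (1 - t)`
because `x ≤ sinh x` for `x ≥ 0`. -/

open Real

theorem Real.sinh_add_mul_sinh_sub (x y : ℝ) :
    sinh (x + y) * sinh (x - y) = sinh x ^ 2 - sinh y ^ 2 := by
  rw [sinh_add, sinh_sub]
  linear_combination sinh x ^ 2 * cosh_sq_sub_sinh_sq y - sinh y ^ 2 * cosh_sq_sub_sinh_sq x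

theorem Real.mul_le_sinh_mul_sinh {x y : ℝ} (hx : 0 ≤ x) (hy : 0 ≤ y) :
    x * y ≤ sinh x * sinh y :=
  mul_le_mul (self_le_sinh_iff.2 hx) (self_le_sinh_iff.2 hy) hy
    (hx.trans (self_le_sinh_iff.2 hx))

theorem Real.sinh_mul_sq_add_sq_mul_sub_le {a t : ℝ} (ha : 0 ≤ a) (ht₀ : 0 ≤ t) (ht₁ : t ≤ 1) :
    sinh (a * t) ^ 2 + a ^ 2 * (1 - t) ≤ sinh a ^ 2 := by
  have hat : a * t ≤ a := mul_le_of_le_one_right ha ht₁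
  have hgap : a ^ 2 * (1 - t) ≤ sinh a ^ 2 - sinh (a * t) ^ 2 :=
    calc a ^ 2 * (1 - t) ≤ (a + a * t) * (a - a * t) := by
          nlinarith [mul_nonneg (sq_nonneg a) (mul_nonneg ht₀ (sub_nonneg.2 ht₁))]
      _ ≤ sinh (a + a * t) * sinh (a - a * t) :=
          mul_le_sinh_mul_sinh (by positivity) (sub_nonneg.2 hat)
      _ = sinh a ^ 2 - sinh (a * t) ^ 2 := sinh_add_mul_sinh_sub _ _
  linarith

theorem qfi_max_at_pi_general (g : ℝ) (hg : 0 < g) (φ : ℝ) :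
    (1 / 4) * Real.sinh (4 * g * Real.sin (φ / 2) ^ 2) ^ 2 + 4 * g ^ 2 * Real.cos (φ / 2) ^ 2 ≤
      (1 / 4) * Real.sinh (4 * g * Real.sin (Real.pi / 2) ^ 2) ^ 2 +
        4 * g ^ 2 * Real.cos (Real.pi / 2) ^ 2 := by
  have key := sinh_mul_sq_add_sq_mul_sub_le (by positivity : 0 ≤ 4 * g)
    (sq_nonneg (sin (φ / 2))) (sin_sq_le_one (φ / 2))
  rw [sin_pi_div_two, cos_pi_div_two, cos_sq' (φ / 2), one_pow, mul_one]
  linear_combination (1 / 4) * key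

/-- The QFI(φ) = (1/4)sinh²(4g sin²(φ/2)) + 4g²cos²(φ/2) attains its global maximum
over [0,2π] at φ = π. -/
theorem qfi_max_at_pi (g : ℝ) (hg : 0 < g) (φ : ℝ) (hφ : φ ∈ Set.Icc 0 (2 * Real.pi)) :
    (1 / 4) * Real.sinh (4 * g * Real.sin (φ / 2) ^ 2) ^ 2 + 4 * g ^ 2 * Real.cos (φ / 2) ^ 2 ≤
      (1 / 4) * Real.sinh (4 * g * Real.sin (Real.pi / 2) ^ 2) ^ 2 +
        4 * g ^ 2 * Real.cos (Real.pi / 2) ^ 2 :=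
  qfi_max_at_pi_general g hg φ
end

section
/- The 4×4 real matrix T(λ,θ,ξ) with entries given in Domain 1 by T = [[cos x, -θs/x, λ sin ξ s/x, -λ cos ξ s/x],[θs/x, cos x, -λ cos ξ s/x, -λ sin ξ s/x],[λ sin ξ s/x, -λ cos ξ s/x, cos x, -θs/x],[-λ cos ξ s/x, -λ sin ξ s/x, θs/x, cos x]], where s = sin x and x = √(θ²-λ²) with θ² > λ², is symplectic: Tᵀ·Δ·T = Δ for Δ = diag-block(J, J), J = [[0,1],[-1,0]]. -/
open Matrix

/-- The standard symplectic form on ℝ⁴: block diagonal with blocks [[0,1],[-1,0]]. -/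
def SympForm : Matrix (Fin 4) (Fin 4) ℝ :=
  !![0, 1, 0, 0; -1, 0, 0, 0; 0, 0, 0, 1; 0, 0, -1, 0]

/-- The Domain 1 matrix T (with s = sin x, x = √(θ²-λ²), θ² > λ² > 0). -/
noncomputable def TDomain1 (lam θ ξ : ℝ) : Matrix (Fin 4) (Fin 4) ℝ :=
  let x := Real.sqrt (θ ^ 2 - lam ^ 2)
  let s := Real.sin x
  !![Real.cos x, -θ * s / x, lam * Real.sin ξ * s / x, -lam * Real.cos ξ * s / x;
     θ * s / x, Real.cos x, -lam * Real.cos ξ * s / x, -lam * Real.sin ξ * s / x;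
     lam * Real.sin ξ * s / x, -lam * Real.cos ξ * s / x, Real.cos x, -θ * s / x;
     -lam * Real.cos ξ * s / x, -lam * Real.sin ξ * s / x, θ * s / x, Real.cos x]

/-!
With `x = √(θ² - λ²)` and `s = sin x`, the matrix `T` is `sympPattern c a b d` for
`c = cos x`, `a = θ s / x`, `b = λ sin ξ s / x`, `d = λ cos ξ s / x`. Every entry of
`Mᵀ Δ M - Δ` for `M = sympPattern c a b d` is `0` or `±(c² + a² - b² - d² - 1)`, and here
`c² + a² - b² - d² = cos² x + (θ² - λ²) s² / x² = cos² x + sin² x = 1`.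
-/

def sympPattern (c a b d : ℝ) : Matrix (Fin 4) (Fin 4) ℝ :=
  !![c, -a, b, -d; a, c, -d, -b; b, -d, c, -a; -d, -b, a, c]

theorem sympPattern_transpose_mul_sympForm_mul_self {c a b d : ℝ}
    (h : c ^ 2 + a ^ 2 - b ^ 2 - d ^ 2 = 1) :
    (sympPattern c a b d)ᵀ * SympForm * sympPattern c a b d = SympForm := by
  ext i j
  fin_cases i <;> fin_cases j <;>
    simp [sympPattern, SympForm, Matrix.mul_apply, Fin.sum_univ_four] <;>
    linarith

theorem TDomain1_eq_sympPattern (lam θ ξ : ℝ) :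
    let x := Real.sqrt (θ ^ 2 - lam ^ 2)
    TDomain1 lam θ ξ = sympPattern (Real.cos x) (θ * Real.sin x / x)
      (lam * Real.sin ξ * Real.sin x / x) (lam * Real.cos ξ * Real.sin x / x) := by
  ext i j
  fin_cases i <;> fin_cases j <;> simp [TDomain1, sympPattern, neg_div]

theorem TDomain1_symplectic_general (lam θ ξ : ℝ) (h1 : lam ^ 2 < θ ^ 2) :
    (TDomain1 lam θ ξ)ᵀ * SympForm * TDomain1 lam θ ξ = SympForm := by
  rw [TDomain1_eq_sympPattern]
  apply sympPattern_transpose_mul_sympForm_mul_self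
  set x := Real.sqrt (θ ^ 2 - lam ^ 2)
  have hx_sq : x ^ 2 = θ ^ 2 - lam ^ 2 := Real.sq_sqrt (by linarith)
  have hx : x ≠ 0 := by positivity
  field_simp
  linear_combination -lam ^ 2 * Real.sin x ^ 2 * Real.sin_sq_add_cos_sq ξ
    - Real.sin x ^ 2 * hx_sq + x ^ 2 * Real.sin_sq_add_cos_sq x

/-- The Domain 1 matrix T is symplectic: Tᵀ·Δ·T = Δ. -/
theorem TDomain1_symplectic (lam θ ξ : ℝ) (h1 : lam ^ 2 < θ ^ 2) (h2 : 0 < lam ^ 2) :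
    (TDomain1 lam θ ξ)ᵀ * SympForm * TDomain1 lam θ ξ = SympForm :=
  TDomain1_symplectic_general lam θ ξ h1
end
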